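/- For any C ∈ S₂(H₁ ⊗ H₂) and nonzero Δ ∈ S₂(H₂), the quantity D₀ = ‖C‖₂² − ‖T₁(C, T₂(C, Δ))‖₂² / ‖T₂(C, Δ)‖₂² equals ‖C − T₂(C,Δ) ⊗̃ (T₁(C, T₂(C,Δ))/‖T₂(C,Δ)‖₂²)‖₂², and hence D₀ ≥ 0. -/
import Mathlib


open scoped InnerProductSpace
noncomputable section

/-- Hilbert–Schmidt inner product of two operators with respect to a Hilbert basis. -/
def hsInner {ι E : Type*} [NormedAddCommGroup E] [InnerProductSpace ℝ E]
    (b : HilbertBasis ι ℝ E) (A B : E →L[ℝ] E) : ℝ :=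
  ∑' i, ⟪A (b i), B (b i)⟫_ℝ

/-- Hilbert–Schmidt norm. -/
def hsNorm {ι E : Type*} [NormedAddCommGroup E] [InnerProductSpace ℝ E]
    (b : HilbertBasis ι ℝ E) (A : E →L[ℝ] E) : ℝ :=
  Real.sqrt (hsInner b A A)

/-- Being a Hilbert–Schmidt operator. -/
def IsHS {ι E : Type*} [NormedAddCommGroup E] [InnerProductSpace ℝ E]
    (b : HilbertBasis ι ℝ E) (A : E →L[ℝ] E) : Prop :=
  Summable fun i => ‖A (b i)‖ ^ 2

/-- A realization of the Hilbert space `H` as the Hilbert tensor product `H₁ ⊗ H₂`,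
together with the operator tensor product `⊗̃`: `tmul` is bilinear with
`⟪u ⊗ v, w ⊗ z⟫ = ⟪u,w⟫⟪v,z⟫`, elementary tensors span a dense subspace, and
`otimes C₁ C₂` is the bounded operator with `(C₁ ⊗̃ C₂)(u ⊗ v) = C₁ u ⊗ C₂ v`. -/
structure HilbertTensorProduct (H₁ H₂ H : Type*) [NormedAddCommGroup H₁]
    [InnerProductSpace ℝ H₁] [NormedAddCommGroup H₂] [InnerProductSpace ℝ H₂]
    [NormedAddCommGroup H] [InnerProductSpace ℝ H] : Type _ where
  tmul : H₁ →ₗ[ℝ] H₂ →ₗ[ℝ] H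
  inner_tmul : ∀ (u w : H₁) (v z : H₂),
    ⟪tmul u v, tmul w z⟫_ℝ = ⟪u, w⟫_ℝ * ⟪v, z⟫_ℝ
  dense_span : (Submodule.span ℝ
    (Set.range fun p : H₁ × H₂ => tmul p.1 p.2)).topologicalClosure = ⊤
  otimes : (H₁ →L[ℝ] H₁) → (H₂ →L[ℝ] H₂) → (H →L[ℝ] H)
  otimes_tmul : ∀ (C₁ : H₁ →L[ℝ] H₁) (C₂ : H₂ →L[ℝ] H₂) (u : H₁) (v : H₂),
    otimes C₁ C₂ (tmul u v) = tmul (C₁ u) (C₂ v)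

variable {ι₁ ι₂ κ H₁ H₂ H : Type*}
variable [NormedAddCommGroup H₁] [InnerProductSpace ℝ H₁] [CompleteSpace H₁]
variable [NormedAddCommGroup H₂] [InnerProductSpace ℝ H₂] [CompleteSpace H₂]
variable [NormedAddCommGroup H] [InnerProductSpace ℝ H] [CompleteSpace H]

/-- `T₁` is the partial-trace type map `S₂(H₁ ⊗ H₂) × S₂(H₁) → S₂(H₂)` determined by
`T₁(A ⊗̃ B, C₁) = ⟨A, C₁⟩ B`; it is characterized by mapping Hilbert–Schmidt operators to
Hilbert–Schmidt operators and the duality identity `⟨B, T₁(C,C₁)⟩ = ⟨C, C₁ ⊗̃ B⟩`. -/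
def IsT1 {ι₁ ι₂ κ H₁ H₂ H : Type*}
    [NormedAddCommGroup H₁] [InnerProductSpace ℝ H₁]
    [NormedAddCommGroup H₂] [InnerProductSpace ℝ H₂]
    [NormedAddCommGroup H] [InnerProductSpace ℝ H]
    (P : HilbertTensorProduct H₁ H₂ H)
    (b₁ : HilbertBasis ι₁ ℝ H₁) (b₂ : HilbertBasis ι₂ ℝ H₂) (b : HilbertBasis κ ℝ H)
    (T₁ : (H →L[ℝ] H) → (H₁ →L[ℝ] H₁) → (H₂ →L[ℝ] H₂)) : Prop :=
  (∀ C C₁, IsHS b C → IsHS b₁ C₁ → IsHS b₂ (T₁ C C₁)) ∧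
  (∀ C C₁ B, IsHS b C → IsHS b₁ C₁ → IsHS b₂ B →
      hsInner b₂ B (T₁ C C₁) = hsInner b C (P.otimes C₁ B))

/-- `T₂` is the map `S₂(H₁ ⊗ H₂) × S₂(H₂) → S₂(H₁)` determined by
`T₂(A ⊗̃ B, C₂) = ⟨B, C₂⟩ A`; characterized by `⟨A, T₂(C,C₂)⟩ = ⟨C, A ⊗̃ C₂⟩`. -/
def IsT2 {ι₁ ι₂ κ H₁ H₂ H : Type*}
    [NormedAddCommGroup H₁] [InnerProductSpace ℝ H₁]
    [NormedAddCommGroup H₂] [InnerProductSpace ℝ H₂]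
    [NormedAddCommGroup H] [InnerProductSpace ℝ H]
    (P : HilbertTensorProduct H₁ H₂ H)
    (b₁ : HilbertBasis ι₁ ℝ H₁) (b₂ : HilbertBasis ι₂ ℝ H₂) (b : HilbertBasis κ ℝ H)
    (T₂ : (H →L[ℝ] H) → (H₂ →L[ℝ] H₂) → (H₁ →L[ℝ] H₁)) : Prop :=
  (∀ C C₂, IsHS b C → IsHS b₂ C₂ → IsHS b₁ (T₂ C C₂)) ∧
  (∀ C C₂ A, IsHS b C → IsHS b₂ C₂ → IsHS b₁ A →
      hsInner b₁ A (T₂ C C₂) = hsInner b C (P.otimes A C₂))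

section Aux

variable {ι κ E : Type*} [NormedAddCommGroup E] [InnerProductSpace ℝ E]

/-- Parseval for the squared norm. -/
lemma parseval_sq (b : HilbertBasis ι ℝ E) (x : E) :
    HasSum (fun i => ⟪x, b i⟫_ℝ ^ 2) (‖x‖ ^ 2) := by
  have h := b.hasSum_inner_mul_inner x x
  rw [real_inner_self_eq_norm_sq] at h
  refine h.congr_fun fun i => ?_
  rw [sq, real_inner_comm (b i) x]

lemma summable_mul_sq {α : Type*} {f g : α → ℝ} (hf : Summable fun a => f a ^ 2)
    (hg : Summable fun a => g a ^ 2) : Summable fun a => f a * g a := by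
  have hb : Summable fun a => (1/2) * (f a ^ 2 + g a ^ 2) := (hf.add hg).mul_left _
  refine Summable.of_abs (Summable.of_nonneg_of_le (fun a => abs_nonneg _) (fun a => ?_) hb)
  have h1 : |f a * g a| = |f a| * |g a| := abs_mul _ _
  nlinarith [sq_nonneg (|f a| - |g a|), sq_abs (f a), sq_abs (g a), abs_nonneg (f a),
    abs_nonneg (g a)]

lemma hsInner_self_eq (b : HilbertBasis ι ℝ E) (S : E →L[ℝ] E) :
    hsInner b S S = ∑' i, ‖S (b i)‖ ^ 2 := by
  unfold hsInner
  exact tsum_congr fun i => real_inner_self_eq_norm_sq _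

lemma hsInner_self_nonneg (b : HilbertBasis ι ℝ E) (S : E →L[ℝ] E) :
    0 ≤ hsInner b S S := by
  rw [hsInner_self_eq]
  exact tsum_nonneg fun i => sq_nonneg _

lemma hsNorm_sq (b : HilbertBasis ι ℝ E) (S : E →L[ℝ] E) :
    hsNorm b S ^ 2 = hsInner b S S :=
  Real.sq_sqrt (hsInner_self_nonneg b S)

lemma hs_prod_summable (b : HilbertBasis ι ℝ E) (c : HilbertBasis κ ℝ E) {S : E →L[ℝ] E}
    (hS : IsHS b S) : Summable fun p : ι × κ => ⟪S (b p.1), c p.2⟫_ℝ ^ 2 := by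
  rw [summable_prod_of_nonneg fun p => sq_nonneg _]
  refine ⟨fun i => (parseval_sq c (S (b i))).summable, ?_⟩
  exact hS.congr fun i => ((parseval_sq c (S (b i))).tsum_eq).symm

variable [CompleteSpace E]

open ContinuousLinearMap in
lemma isHS_adjoint (b : HilbertBasis ι ℝ E) (c : HilbertBasis κ ℝ E) {S : E →L[ℝ] E}
    (hS : IsHS b S) : IsHS c (adjoint S) := by
  have h2 : Summable fun p : κ × ι => ⟪S (b p.2), c p.1⟫_ℝ ^ 2 :=
    (hs_prod_summable b c hS).prod_symm
  have h3 := ((summable_prod_of_nonneg fun p => sq_nonneg _).mp h2).2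
  refine h3.congr fun j => ?_
  have h4 := parseval_sq b (adjoint S (c j))
  rw [← h4.tsum_eq]
  refine tsum_congr fun i => ?_
  rw [ContinuousLinearMap.adjoint_inner_left, real_inner_comm]

open ContinuousLinearMap in
lemma hsInner_adjoint (b : HilbertBasis ι ℝ E) (c : HilbertBasis κ ℝ E) {S T : E →L[ℝ] E}
    (hS : IsHS b S) (hT : IsHS b T) :
    hsInner b S T = hsInner c (adjoint S) (adjoint T) := by
  have hsum : Summable fun p : ι × κ => ⟪S (b p.1), c p.2⟫_ℝ * ⟪T (b p.1), c p.2⟫_ℝ :=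
    summable_mul_sq (hs_prod_summable b c hS) (hs_prod_summable b c hT)
  have fib1 : ∀ i, Summable fun j => ⟪S (b i), c j⟫_ℝ * ⟪T (b i), c j⟫_ℝ := fun i =>
    summable_mul_sq (parseval_sq c (S (b i))).summable (parseval_sq c (T (b i))).summable
  have fib2 : ∀ j : κ, Summable fun i => ⟪S (b i), c j⟫_ℝ * ⟪T (b i), c j⟫_ℝ := fun j => by
    have := summable_mul_sq (f := fun i => ⟪adjoint S (c j), b i⟫_ℝ)
      (g := fun i => ⟪adjoint T (c j), b i⟫_ℝ)
      (parseval_sq b _).summable (parseval_sq b _).summable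
    refine this.congr fun i => ?_
    simp only [ContinuousLinearMap.adjoint_inner_left]
    rw [real_inner_comm (S (b i)) (c j), real_inner_comm (T (b i)) (c j)]
  calc hsInner b S T = ∑' i, ∑' j, ⟪S (b i), c j⟫_ℝ * ⟪T (b i), c j⟫_ℝ := by
        refine tsum_congr fun i => ?_
        rw [← c.tsum_inner_mul_inner (S (b i)) (T (b i))]
        exact tsum_congr fun j => by rw [real_inner_comm (c j) (T (b i))]
    _ = ∑' p : ι × κ, ⟪S (b p.1), c p.2⟫_ℝ * ⟪T (b p.1), c p.2⟫_ℝ :=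
        (Summable.tsum_prod' hsum fib1).symm
    _ = ∑' p : κ × ι, ⟪S (b p.2), c p.1⟫_ℝ * ⟪T (b p.2), c p.1⟫_ℝ := by
        rw [← (Equiv.prodComm κ ι).tsum_eq
          (fun p : ι × κ => ⟪S (b p.1), c p.2⟫_ℝ * ⟪T (b p.1), c p.2⟫_ℝ)]
        rfl
    _ = ∑' j, ∑' i, ⟪S (b i), c j⟫_ℝ * ⟪T (b i), c j⟫_ℝ :=
        Summable.tsum_prod' hsum.prod_symm fib2
    _ = hsInner c (adjoint S) (adjoint T) := by
        refine tsum_congr fun j => ?_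
        rw [← b.tsum_inner_mul_inner (adjoint S (c j)) (adjoint T (c j))]
        refine tsum_congr fun i => ?_
        simp only [ContinuousLinearMap.adjoint_inner_left,
          ContinuousLinearMap.adjoint_inner_right]
        rw [real_inner_comm (S (b i)) (c j)]

lemma isHS_indep (b : HilbertBasis ι ℝ E) (c : HilbertBasis κ ℝ E) {S : E →L[ℝ] E}
    (hS : IsHS b S) : IsHS c S := by
  have h1 := isHS_adjoint b c hS
  have h2 := isHS_adjoint c c h1
  rwa [ContinuousLinearMap.adjoint_adjoint] at h2

lemma hsInner_indep (b : HilbertBasis ι ℝ E) (c : HilbertBasis κ ℝ E) {S T : E →L[ℝ] E}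
    (hS : IsHS b S) (hT : IsHS b T) : hsInner b S T = hsInner c S T := by
  have h1 := hsInner_adjoint b c hS hT
  have h2 := hsInner_adjoint c c (isHS_indep b c hS) (isHS_indep b c hT)
  rw [h1, h2]

end Aux


section Aux2

variable {ι E : Type*} [NormedAddCommGroup E] [InnerProductSpace ℝ E]

lemma summable_inner_of_isHS (b : HilbertBasis ι ℝ E) {S T : E →L[ℝ] E}
    (hS : IsHS b S) (hT : IsHS b T) : Summable fun i => ⟪S (b i), T (b i)⟫_ℝ := by
  have h := summable_mul_sq (f := fun i => ‖S (b i)‖) (g := fun i => ‖T (b i)‖) hS hT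
  exact Summable.of_abs (Summable.of_nonneg_of_le (fun i => abs_nonneg _)
    (fun i => abs_real_inner_le_norm _ _) h)

lemma isHS_smul (b : HilbertBasis ι ℝ E) {S : E →L[ℝ] E} (r : ℝ) (hS : IsHS b S) :
    IsHS b (r • S) := by
  refine (hS.mul_left (r ^ 2)).congr fun i => ?_
  rw [ContinuousLinearMap.smul_apply, norm_smul, mul_pow, Real.norm_eq_abs, sq_abs]

lemma hsInner_smul_left (b : HilbertBasis ι ℝ E) (S T : E →L[ℝ] E) (r : ℝ) :
    hsInner b (r • S) T = r * hsInner b S T := by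
  unfold hsInner
  rw [← tsum_mul_left]
  exact tsum_congr fun i => by rw [ContinuousLinearMap.smul_apply, real_inner_smul_left]

lemma hsInner_comm (b : HilbertBasis ι ℝ E) (S T : E →L[ℝ] E) :
    hsInner b S T = hsInner b T S :=
  tsum_congr fun i => real_inner_comm _ _

lemma hsInner_sub_sub (b : HilbertBasis ι ℝ E) {S T : E →L[ℝ] E}
    (hS : IsHS b S) (hT : IsHS b T) :
    hsInner b (S - T) (S - T) = hsInner b S S - 2 * hsInner b S T + hsInner b T T := by
  have sSS : Summable fun i => ⟪S (b i), S (b i)⟫_ℝ :=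
    hS.congr fun i => (real_inner_self_eq_norm_sq _).symm
  have sTT : Summable fun i => ⟪T (b i), T (b i)⟫_ℝ :=
    hT.congr fun i => (real_inner_self_eq_norm_sq _).symm
  have sST := summable_inner_of_isHS b hS hT
  unfold hsInner
  have hpt : ∀ i, ⟪(S - T) (b i), (S - T) (b i)⟫_ℝ =
      ⟪S (b i), S (b i)⟫_ℝ - 2 * ⟪S (b i), T (b i)⟫_ℝ + ⟪T (b i), T (b i)⟫_ℝ := fun i => by
    rw [ContinuousLinearMap.sub_apply, real_inner_sub_sub_self]
  rw [tsum_congr hpt, Summable.tsum_add (sSS.sub (sST.mul_left 2)) sTT,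
    Summable.tsum_sub sSS (sST.mul_left 2), tsum_mul_left]

lemma hsInner_self_pos (b : HilbertBasis ι ℝ E) {S : E →L[ℝ] E} (hS : IsHS b S)
    (hne : S ≠ 0) : 0 < hsInner b S S := by
  rw [hsInner_self_eq]
  by_cases h : ∀ i, S (b i) = 0
  · exfalso
    apply hne
    ext x
    have hr := (b.hasSum_repr x).mapL S
    have h2 : HasSum (fun _ : ι => (0 : E)) (S x) := by
      refine hr.congr_fun fun i => ?_
      rw [map_smul, h i, smul_zero]
    rw [ContinuousLinearMap.zero_apply]
    exact h2.unique hasSum_zero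
  · push_neg at h
    obtain ⟨i₀, h0⟩ := h
    have hle : ‖S (b i₀)‖ ^ 2 ≤ ∑' i, ‖S (b i)‖ ^ 2 := Summable.le_tsum hS i₀ fun j _ => sq_nonneg _
    have hpos : 0 < ‖S (b i₀)‖ ^ 2 := pow_pos (norm_pos_iff.mpr h0) 2
    linarith

end Aux2

section Tensor

variable {ι₁ ι₂ H₁ H₂ H : Type*}
variable [NormedAddCommGroup H₁] [InnerProductSpace ℝ H₁] [CompleteSpace H₁]
variable [NormedAddCommGroup H₂] [InnerProductSpace ℝ H₂] [CompleteSpace H₂]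
variable [NormedAddCommGroup H] [InnerProductSpace ℝ H] [CompleteSpace H]

lemma norm_tmul (P : HilbertTensorProduct H₁ H₂ H) (u : H₁) (v : H₂) :
    ‖P.tmul u v‖ = ‖u‖ * ‖v‖ := by
  have h := P.inner_tmul u u v v
  rw [real_inner_self_eq_norm_sq, real_inner_self_eq_norm_sq, real_inner_self_eq_norm_sq] at h
  rw [← Real.sqrt_sq (norm_nonneg (P.tmul u v)), h, ← mul_pow,
    Real.sqrt_sq (by positivity)]

/-- `v ↦ u ⊗ v` as a continuous linear map. -/
def tmulL (P : HilbertTensorProduct H₁ H₂ H) (u : H₁) : H₂ →L[ℝ] H :=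
  LinearMap.mkContinuous (P.tmul u) ‖u‖ fun v => le_of_eq (norm_tmul P u v)

@[simp] lemma tmulL_apply (P : HilbertTensorProduct H₁ H₂ H) (u : H₁) (v : H₂) :
    tmulL P u v = P.tmul u v := rfl

/-- `u ↦ u ⊗ v` as a continuous linear map. -/
def tmulR (P : HilbertTensorProduct H₁ H₂ H) (v : H₂) : H₁ →L[ℝ] H :=
  LinearMap.mkContinuous (P.tmul.flip v) ‖v‖ fun u => by
    rw [LinearMap.flip_apply, mul_comm]
    exact le_of_eq (norm_tmul P u v)

@[simp] lemma tmulR_apply (P : HilbertTensorProduct H₁ H₂ H) (v : H₂) (u : H₁) :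
    tmulR P v u = P.tmul u v := rfl

lemma mem_closed_submodule_of_hasSum {α : Type*} {M : Submodule ℝ H}
    (hM : IsClosed (M : Set H)) {f : α → H} {x : H} (h : HasSum f x)
    (hf : ∀ a, f a ∈ M) : x ∈ M :=
  hM.mem_of_tendsto h (Filter.Eventually.of_forall fun s =>
    Submodule.sum_mem M fun i _ => hf i)

lemma tensor_orthonormal (P : HilbertTensorProduct H₁ H₂ H)
    (b₁ : HilbertBasis ι₁ ℝ H₁) (b₂ : HilbertBasis ι₂ ℝ H₂) :
    Orthonormal ℝ (fun p : ι₁ × ι₂ => P.tmul (b₁ p.1) (b₂ p.2)) := by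
  classical
  rw [orthonormal_iff_ite]
  intro p q
  rw [P.inner_tmul]
  have h1 := b₁.orthonormal
  have h2 := b₂.orthonormal
  rw [orthonormal_iff_ite] at h1 h2
  rw [h1 p.1 q.1, h2 p.2 q.2]
  by_cases e1 : p.1 = q.1 <;> by_cases e2 : p.2 = q.2 <;>
    simp [e1, e2, Prod.ext_iff]

lemma tensor_dense (P : HilbertTensorProduct H₁ H₂ H)
    (b₁ : HilbertBasis ι₁ ℝ H₁) (b₂ : HilbertBasis ι₂ ℝ H₂) :
    ⊤ ≤ (Submodule.span ℝ
      (Set.range fun p : ι₁ × ι₂ => P.tmul (b₁ p.1) (b₂ p.2))).topologicalClosure := by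
  set M := (Submodule.span ℝ
      (Set.range fun p : ι₁ × ι₂ => P.tmul (b₁ p.1) (b₂ p.2))).topologicalClosure with hMdef
  have hclosed : IsClosed (M : Set H) := Submodule.isClosed_topologicalClosure _
  have hstep1 : ∀ (i : ι₁) (v : H₂), P.tmul (b₁ i) v ∈ M := by
    intro i v
    have hr := (b₂.hasSum_repr v).mapL (tmulL P (b₁ i))
    refine mem_closed_submodule_of_hasSum hclosed hr fun j => ?_
    have h3 : (tmulL P (b₁ i)) (b₂.repr v j • b₂ j) =
        b₂.repr v j • P.tmul (b₁ i) (b₂ j) := by rw [map_smul]; rfl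
    rw [h3]
    exact M.smul_mem _ (Submodule.le_topologicalClosure _
      (Submodule.subset_span ⟨(i, j), rfl⟩))
  have hstep2 : ∀ (u : H₁) (v : H₂), P.tmul u v ∈ M := by
    intro u v
    have hr := (b₁.hasSum_repr u).mapL (tmulR P v)
    refine mem_closed_submodule_of_hasSum hclosed hr fun i => ?_
    have h3 : (tmulR P v) (b₁.repr u i • b₁ i) =
        b₁.repr u i • P.tmul (b₁ i) v := by rw [map_smul]; rfl
    rw [h3]
    exact M.smul_mem _ (hstep1 i v)
  calc (⊤ : Submodule ℝ H)
      = (Submodule.span ℝ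
          (Set.range fun p : H₁ × H₂ => P.tmul p.1 p.2)).topologicalClosure :=
        P.dense_span.symm
    _ ≤ M := by
        refine Submodule.topologicalClosure_minimal _ (Submodule.span_le.mpr ?_) hclosed
        rintro x ⟨p, rfl⟩
        exact hstep2 p.1 p.2

/-- Hilbert basis of elementary tensors. -/
def tensorBasis (P : HilbertTensorProduct H₁ H₂ H)
    (b₁ : HilbertBasis ι₁ ℝ H₁) (b₂ : HilbertBasis ι₂ ℝ H₂) :
    HilbertBasis (ι₁ × ι₂) ℝ H :=
  HilbertBasis.mk (tensor_orthonormal P b₁ b₂) (tensor_dense P b₁ b₂)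

lemma tensorBasis_apply (P : HilbertTensorProduct H₁ H₂ H)
    (b₁ : HilbertBasis ι₁ ℝ H₁) (b₂ : HilbertBasis ι₂ ℝ H₂) (p : ι₁ × ι₂) :
    tensorBasis P b₁ b₂ p = P.tmul (b₁ p.1) (b₂ p.2) :=
  congrFun (HilbertBasis.coe_mk _ _) p

lemma isHS_otimes (P : HilbertTensorProduct H₁ H₂ H)
    (b₁ : HilbertBasis ι₁ ℝ H₁) (b₂ : HilbertBasis ι₂ ℝ H₂)
    {A : H₁ →L[ℝ] H₁} {X : H₂ →L[ℝ] H₂} (hA : IsHS b₁ A) (hX : IsHS b₂ X) :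
    IsHS (tensorBasis P b₁ b₂) (P.otimes A X) := by
  refine (Summable.mul_of_nonneg hA hX (fun i => sq_nonneg _)
    (fun j => sq_nonneg _)).congr fun p => ?_
  rw [tensorBasis_apply, P.otimes_tmul, norm_tmul, mul_pow]

lemma isHS_otimes' (P : HilbertTensorProduct H₁ H₂ H)
    (b₁ : HilbertBasis ι₁ ℝ H₁) (b₂ : HilbertBasis ι₂ ℝ H₂)
    (e : HilbertBasis (ι₁ × ι₂) ℝ H)
    (he : ∀ p : ι₁ × ι₂, e p = P.tmul (b₁ p.1) (b₂ p.2))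
    {A : H₁ →L[ℝ] H₁} {X : H₂ →L[ℝ] H₂} (hA : IsHS b₁ A) (hX : IsHS b₂ X) :
    IsHS e (P.otimes A X) := by
  refine (Summable.mul_of_nonneg hA hX (fun i => sq_nonneg _)
    (fun j => sq_nonneg _)).congr fun p => ?_
  rw [he p, P.otimes_tmul, norm_tmul, mul_pow]

lemma hsInner_otimes_self' (P : HilbertTensorProduct H₁ H₂ H)
    (b₁ : HilbertBasis ι₁ ℝ H₁) (b₂ : HilbertBasis ι₂ ℝ H₂)
    (e : HilbertBasis (ι₁ × ι₂) ℝ H)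
    (he : ∀ p : ι₁ × ι₂, e p = P.tmul (b₁ p.1) (b₂ p.2))
    {A : H₁ →L[ℝ] H₁} {X : H₂ →L[ℝ] H₂} (hA : IsHS b₁ A) (hX : IsHS b₂ X) :
    hsInner e (P.otimes A X) (P.otimes A X) = hsInner b₁ A A * hsInner b₂ X X := by
  have hf : Summable fun i => ⟪A (b₁ i), A (b₁ i)⟫_ℝ :=
    hA.congr fun i => (real_inner_self_eq_norm_sq _).symm
  have hg : Summable fun j => ⟪X (b₂ j), X (b₂ j)⟫_ℝ :=
    hX.congr fun j => (real_inner_self_eq_norm_sq _).symm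
  have hprod : Summable fun p : ι₁ × ι₂ =>
      ⟪A (b₁ p.1), A (b₁ p.1)⟫_ℝ * ⟪X (b₂ p.2), X (b₂ p.2)⟫_ℝ :=
    (Summable.mul_of_nonneg hA hX (fun i => sq_nonneg _) (fun j => sq_nonneg _)).congr
      fun p => by
        rw [← real_inner_self_eq_norm_sq (A (b₁ p.1)), ← real_inner_self_eq_norm_sq (X (b₂ p.2))]
  have key : ∀ p : ι₁ × ι₂, ⟪(P.otimes A X) (e p), (P.otimes A X) (e p)⟫_ℝ =
      ⟪A (b₁ p.1), A (b₁ p.1)⟫_ℝ * ⟪X (b₂ p.2), X (b₂ p.2)⟫_ℝ := fun p => by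
    rw [he p, P.otimes_tmul, P.inner_tmul]
  unfold hsInner
  rw [tsum_congr key,
    Summable.tsum_prod' hprod fun i => by simpa using hg.mul_left ⟪A (b₁ i), A (b₁ i)⟫_ℝ,
    tsum_congr fun i : ι₁ => (tsum_mul_left :
      _ = ⟪A (b₁ i), A (b₁ i)⟫_ℝ * ∑' j, ⟪X (b₂ j), X (b₂ j)⟫_ℝ)]
  exact tsum_mul_right

end Tensor


/-- for `C ∈ S₂(H₁ ⊗ H₂)` and `Δ ∈ S₂(H₂)` with `T₂(C,Δ) ≠ 0`,
`D₀ = ‖C‖₂² − ‖T₁(C, T₂(C,Δ))‖₂²/‖T₂(C,Δ)‖₂²` equals the squared distance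
`‖C − T₂(C,Δ) ⊗̃ (T₁(C,T₂(C,Δ))/‖T₂(C,Δ)‖₂²)‖₂²`, hence `D₀ ≥ 0`. -/
theorem stmt10 (P : HilbertTensorProduct H₁ H₂ H)
    (b₁ : HilbertBasis ι₁ ℝ H₁) (b₂ : HilbertBasis ι₂ ℝ H₂) (b : HilbertBasis κ ℝ H)
    (T₁ : (H →L[ℝ] H) → (H₁ →L[ℝ] H₁) → (H₂ →L[ℝ] H₂))
    (T₂ : (H →L[ℝ] H) → (H₂ →L[ℝ] H₂) → (H₁ →L[ℝ] H₁))
    (hT₁ : IsT1 P b₁ b₂ b T₁) (hT₂ : IsT2 P b₁ b₂ b T₂)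
    (C : H →L[ℝ] H) (Δ : H₂ →L[ℝ] H₂) (hC : IsHS b C) (hΔ : IsHS b₂ Δ)
    (hΔne : Δ ≠ 0) (hne : T₂ C Δ ≠ 0) :
    hsNorm b C ^ 2 - hsNorm b₂ (T₁ C (T₂ C Δ)) ^ 2 / hsNorm b₁ (T₂ C Δ) ^ 2 =
        hsNorm b (C - P.otimes (T₂ C Δ)
          ((hsNorm b₁ (T₂ C Δ) ^ 2)⁻¹ • T₁ C (T₂ C Δ))) ^ 2 ∧
      0 ≤ hsNorm b C ^ 2 - hsNorm b₂ (T₁ C (T₂ C Δ)) ^ 2 / hsNorm b₁ (T₂ C Δ) ^ 2 := by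
  classical
  obtain ⟨hT₁mem, hT₁dual⟩ := hT₁
  obtain ⟨hT₂mem, hT₂dual⟩ := hT₂
  set A := T₂ C Δ with hAdef
  have hA : IsHS b₁ A := hT₂mem C Δ hC hΔ
  set B := T₁ C A with hBdef
  have hB : IsHS b₂ B := hT₁mem C A hC hA
  set n := hsInner b₁ A A with hndef
  have hn : 0 < n := hsInner_self_pos b₁ hA hne
  have hNA : hsNorm b₁ A ^ 2 = n := hsNorm_sq b₁ A
  set X := (n : ℝ)⁻¹ • B with hXdef
  have hX : IsHS b₂ X := isHS_smul b₂ n⁻¹ hB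
  obtain ⟨e, he⟩ : ∃ e : HilbertBasis (ι₁ × ι₂) ℝ H,
      ∀ p : ι₁ × ι₂, e p = P.tmul (b₁ p.1) (b₂ p.2) :=
    ⟨tensorBasis P b₁ b₂, tensorBasis_apply P b₁ b₂⟩
  set E := P.otimes A X with hEdef
  have hEe : IsHS e E := isHS_otimes' P b₁ b₂ e he hA hX
  have hEb : IsHS b E := isHS_indep e b hEe
  set m := hsInner b₂ B B with hmdef
  have hm : 0 ≤ m := hsInner_self_nonneg b₂ B
  have hNB : hsNorm b₂ B ^ 2 = m := hsNorm_sq b₂ B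
  have hcross : hsInner b C E = n⁻¹ * m := by
    have h1 := hT₁dual C A X hC hA hX
    rw [← h1, hXdef, hsInner_smul_left]
  have hXX : hsInner b₂ X X = n⁻¹ * (n⁻¹ * m) := by
    rw [hXdef, hsInner_smul_left, hsInner_comm b₂ B, hsInner_smul_left, hsInner_comm b₂ B]
  have hEE : hsInner b E E = n⁻¹ * m := by
    rw [hsInner_indep b e hEb hEb, hEdef, hsInner_otimes_self' P b₁ b₂ e he hA hX, ← hndef,
      hXX]
    field_simp
  have hmain : hsNorm b (C - E) ^ 2 = hsNorm b C ^ 2 - m / n := by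
    rw [hsNorm_sq, hsInner_sub_sub b hC hEb, hcross, hEE, hsNorm_sq]
    field_simp
    ring
  have hXeq : (hsNorm b₁ A ^ 2)⁻¹ • B = X := by rw [hNA]
  rw [hXeq, hNA, hNB, hmain]
  exact ⟨rfl, hmain ▸ sq_nonneg (hsNorm b (C - E))⟩
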